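/- Every tournament on n ≥ 1 vertices contains a transitive subtournament of size at least log₂(n) (equivalently, of size at least ⌊log₂ n⌋ + 1). -/

import Mathlib

open Finset

structure Tournament (V : Type*) where
  adj : V → V → Prop
  irrefl : ∀ v, ¬ adj v v
  asymm : ∀ u v, adj u v → ¬ adj v u
  total : ∀ u v, u ≠ v → adj u v ∨ adj v u

namespace Tournament

variable {V : Type*} [Fintype V] [DecidableEq V]

open Classical in
/-- number of directed edges from `X` to `Y` -/
noncomputable def e (T : Tournament V) (X Y : Finset V) : ℕ :=
  ((X ×ˢ Y).filter fun p => T.adj p.1 p.2).card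

/-- directed density from `X` to `Y` -/
noncomputable def density (T : Tournament V) (X Y : Finset V) : ℝ :=
  (T.e X Y : ℝ) / ((X.card : ℝ) * (Y.card : ℝ))

/-- `S` induces a transitive subtournament -/
def IsTransSet (T : Tournament V) (S : Finset V) : Prop :=
  ∀ a ∈ S, ∀ b ∈ S, ∀ c ∈ S, T.adj a b → T.adj b c → T.adj a c

open Classical in
/-- size of the largest transitive subtournament -/
noncomputable def tr (T : Tournament V) : ℕ :=
  Finset.sup ((Finset.univ : Finset (Finset V)).filter fun S => T.IsTransSet S) Finset.card

/-- `T` contains a copy of `H` -/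
def HasCopy {W : Type*} (T : Tournament V) (H : Tournament W) : Prop :=
  ∃ f : W ↪ V, ∀ a b, H.adj a b → T.adj (f a) (f b)

end Tournament

/-!
Pick any vertex `v`. The remaining vertices split into the out- and in-neighbourhood of `v`, so one
of them, `W`, has at least `(n - 1) / 2` elements. A transitive set inside `W` stays transitive when
`v` is added, since `v` beats all of it or loses to all of it. Inductively this yields a transitive
set `A` with `n < 2 ^ #A`.
-/

namespace Tournament

variable {V : Type*}

theorem IsTransSet.insert_of_forall_adj [DecidableEq V] {T : Tournament V} {A : Finset V} {v : V}
    (hA : T.IsTransSet A) (hv : (∀ u ∈ A, T.adj v u) ∨ ∀ u ∈ A, T.adj u v) :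
    T.IsTransSet (insert v A) := by
  intro a ha b hb c hc hab hbc
  simp only [mem_insert] at ha hb hc
  grind [IsTransSet, T.irrefl, T.asymm]

theorem exists_half_subset_forall_adj [DecidableEq V] (T : Tournament V) {S : Finset V} {v : V}
    (hv : v ∈ S) :
    ∃ W ⊆ S.erase v, #S ≤ 2 * #W + 1 ∧ ((∀ u ∈ W, T.adj v u) ∨ ∀ u ∈ W, T.adj u v) := by
  classical
  set Out := (S.erase v).filter (T.adj v)
  set In := (S.erase v).filter (fun u => ¬ T.adj v u)
  have hIn : ∀ u ∈ In, T.adj u v := by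
    intro u hu
    simp only [In, mem_filter, mem_erase] at hu
    exact (T.total v u (Ne.symm hu.1.1)).resolve_left hu.2
  have hcard : #Out + #In + 1 = #S := by
    rw [card_filter_add_card_filter_not, card_erase_add_one hv]
  rcases le_total #In #Out with h | h
  · exact ⟨Out, filter_subset _ _, by omega, Or.inl fun u hu => (mem_filter.1 hu).2⟩
  · exact ⟨In, filter_subset _ _, by omega, Or.inr hIn⟩

theorem exists_isTransSet_subset_lt_two_pow [DecidableEq V] (T : Tournament V) (S : Finset V) :
    ∃ A ⊆ S, T.IsTransSet A ∧ #S < 2 ^ #A := by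
  induction S using Finset.strongInduction with
  | H S ih =>
  obtain rfl | ⟨v, hv⟩ := S.eq_empty_or_nonempty
  · exact ⟨∅, empty_subset _, by simp [IsTransSet], by simp⟩
  obtain ⟨W, hWS, hSW, hdir⟩ := T.exists_half_subset_forall_adj hv
  obtain ⟨A, hAW, hA, hWA⟩ := ih W (hWS.trans_ssubset (erase_ssubset hv))
  refine ⟨insert v A, insert_subset hv (hAW.trans (hWS.trans (erase_subset v S))), ?_, ?_⟩
  · exact hA.insert_of_forall_adj <|
      hdir.imp (fun h u hu => h u (hAW hu)) fun h u hu => h u (hAW hu)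
  · have hvA : v ∉ A := fun h => notMem_erase v S (hWS (hAW h))
    rw [card_insert_of_notMem hvA, pow_succ]
    omega

theorem IsTransSet.card_le_tr [Fintype V] [DecidableEq V] {T : Tournament V} {S : Finset V}
    (hS : T.IsTransSet S) : #S ≤ T.tr :=
  le_sup (f := Finset.card) (by simpa using hS)

end Tournament

open Tournament in
theorem stmt_2 (n : ℕ) (hn : 1 ≤ n) (T : Tournament (Fin n)) :
    Nat.log 2 n + 1 ≤ T.tr := by
  obtain ⟨A, -, hA, hnA⟩ := T.exists_isTransSet_subset_lt_two_pow univ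
  rw [card_univ, Fintype.card_fin] at hnA
  calc Nat.log 2 n + 1 ≤ #A := Nat.log_lt_of_lt_pow (by omega) hnA
    _ ≤ T.tr := hA.card_le_tr
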